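/- For every positive integer n, the domination polynomial of the generalized book graph B_{n,5} is D(B_{n,5},x) = x^2·(x+1)^{2n+1} − 2x^{n+1} + (x^2+2x)^n·(2x^2+3x). -/
import Mathlib


open Polynomial

/-- `S` is a dominating set of the graph `G`: every vertex not in `S` has a neighbor in `S`. -/
def SimpleGraph.IsDomSet {V : Type*} (G : SimpleGraph V) (S : Finset V) : Prop :=
  ∀ v : V, v ∈ S ∨ ∃ u ∈ S, G.Adj u v

open Classical in
/-- The domination polynomial of a finite graph `G`:
`D(G,x) = ∑ d(G,i) xⁱ` where `d(G,i)` is the number of dominating sets of size `i`. -/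
noncomputable def domPoly {V : Type*} [Fintype V] (G : SimpleGraph V) : Polynomial ℂ :=
  ∑ S ∈ Finset.univ.filter (fun S : Finset V => G.IsDomSet S), X ^ S.card

/-- The generalized book graph `B_{n,5}`: `n` pentagons sharing a common path
`u₁ — u₂ — u₃` of length two.  Vertices: `inl 0 = u₁`, `inl 1 = u₂`, `inl 2 = u₃`,
`inr (i,0) = vᵢ`, `inr (i,1) = wᵢ`; edges `u₁u₂`, `u₂u₃`, `u₁vᵢ`, `u₃wᵢ`, `vᵢwᵢ`. -/
def genBook5 (n : ℕ) : SimpleGraph (Fin 3 ⊕ (Fin n × Fin 2)) :=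
  SimpleGraph.fromRel (fun a b =>
    (a = Sum.inl 0 ∧ b = Sum.inl 1) ∨
    (a = Sum.inl 1 ∧ b = Sum.inl 2) ∨
    (∃ i, a = Sum.inl 0 ∧ b = Sum.inr (i, 0)) ∨
    (∃ i, a = Sum.inl 2 ∧ b = Sum.inr (i, 1)) ∨
    (∃ i, a = Sum.inr (i, 0) ∧ b = Sum.inr (i, 1)))

namespace DomProofAux

variable {n : ℕ}

/-- Membership predicate corresponding to the data `(b1, b2, b3, g)`. -/
def Pt (b1 b2 b3 : Bool) (g : Fin n → Finset (Fin 2)) : (Fin 3 ⊕ (Fin n × Fin 2)) → Prop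
  | Sum.inl a => if a = 0 then b1 = true else if a = 1 then b2 = true else b3 = true
  | Sum.inr p => p.2 ∈ g p.1

open Classical in
noncomputable def Et (b1 b2 b3 : Bool) (g : Fin n → Finset (Fin 2)) :
    Finset (Fin 3 ⊕ (Fin n × Fin 2)) :=
  Finset.univ.filter (Pt b1 b2 b3 g)

@[simp] lemma mem_Et {b1 b2 b3 : Bool} {g : Fin n → Finset (Fin 2)}
    (v : Fin 3 ⊕ (Fin n × Fin 2)) : v ∈ Et b1 b2 b3 g ↔ Pt b1 b2 b3 g v := by
  classical simp [Et]

@[simp] lemma Pt_inl0 {b1 b2 b3 : Bool} {g : Fin n → Finset (Fin 2)} :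
    Pt b1 b2 b3 g (Sum.inl 0) ↔ b1 = true := by simp [Pt]
@[simp] lemma Pt_inl1 {b1 b2 b3 : Bool} {g : Fin n → Finset (Fin 2)} :
    Pt b1 b2 b3 g (Sum.inl 1) ↔ b2 = true := by simp [Pt]
@[simp] lemma Pt_inl2 {b1 b2 b3 : Bool} {g : Fin n → Finset (Fin 2)} :
    Pt b1 b2 b3 g (Sum.inl 2) ↔ b3 = true := by simp [Pt]
@[simp] lemma Pt_inr {b1 b2 b3 : Bool} {g : Fin n → Finset (Fin 2)} (i : Fin n) (j : Fin 2) :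
    Pt b1 b2 b3 g (Sum.inr (i, j)) ↔ j ∈ g i := by simp [Pt]

/-- The bijection between data tuples and subsets of the vertex set. -/
noncomputable def E (n : ℕ) : (Bool × Bool × Bool × (Fin n → Finset (Fin 2))) ≃
    Finset (Fin 3 ⊕ (Fin n × Fin 2)) where
  toFun t := Et t.1 t.2.1 t.2.2.1 t.2.2.2
  invFun S := (decide (Sum.inl 0 ∈ S), decide (Sum.inl 1 ∈ S), decide (Sum.inl 2 ∈ S),
    fun i => Finset.univ.filter (fun j => Sum.inr (i, j) ∈ S))
  left_inv := by
    rintro ⟨b1, b2, b3, g⟩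
    refine Prod.ext ?_ (Prod.ext ?_ (Prod.ext ?_ ?_)) <;> simp
  right_inv := by
    intro S
    ext v
    rcases v with a | ⟨i, j⟩
    · fin_cases a <;> simp
    · simp

lemma card_Et (b1 b2 b3 : Bool) (g : Fin n → Finset (Fin 2)) :
    (Et b1 b2 b3 g).card =
      ((cond b1 1 0) + (cond b2 1 0) + (cond b3 1 0)) + ∑ i, (g i).card := by
  classical
  rw [Et, Finset.card_filter]
  rw [Fintype.sum_sum_type]
  congr 1
  · rw [Fin.sum_univ_three]
    cases b1 <;> cases b2 <;> cases b3 <;> simp [Pt]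
  · rw [Fintype.sum_prod_type]
    refine Finset.sum_congr rfl fun i _ => ?_
    simp only [Pt_inr]
    rw [Finset.sum_ite_mem, Finset.univ_inter, Finset.sum_const, smul_eq_mul, mul_one]

lemma adj_inl0 (u : Fin 3 ⊕ (Fin n × Fin 2)) :
    (genBook5 n).Adj u (Sum.inl 0) ↔ u = Sum.inl 1 ∨ ∃ i, u = Sum.inr (i, 0) := by
  unfold genBook5; rw [SimpleGraph.fromRel_adj]; aesop
lemma adj_inl1 (u : Fin 3 ⊕ (Fin n × Fin 2)) :
    (genBook5 n).Adj u (Sum.inl 1) ↔ u = Sum.inl 0 ∨ u = Sum.inl 2 := by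
  unfold genBook5; rw [SimpleGraph.fromRel_adj]; aesop
lemma adj_inl2 (u : Fin 3 ⊕ (Fin n × Fin 2)) :
    (genBook5 n).Adj u (Sum.inl 2) ↔ u = Sum.inl 1 ∨ ∃ i, u = Sum.inr (i, 1) := by
  unfold genBook5; rw [SimpleGraph.fromRel_adj]; aesop
lemma adj_inr0 (i : Fin n) (u : Fin 3 ⊕ (Fin n × Fin 2)) :
    (genBook5 n).Adj u (Sum.inr (i, 0)) ↔ u = Sum.inl 0 ∨ u = Sum.inr (i, 1) := by
  unfold genBook5; rw [SimpleGraph.fromRel_adj]; aesop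
lemma adj_inr1 (i : Fin n) (u : Fin 3 ⊕ (Fin n × Fin 2)) :
    (genBook5 n).Adj u (Sum.inr (i, 1)) ↔ u = Sum.inl 2 ∨ u = Sum.inr (i, 0) := by
  unfold genBook5; rw [SimpleGraph.fromRel_adj]; aesop

lemma fin3_forall (Q : Fin 3 → Prop) : (∀ a, Q a) ↔ Q 0 ∧ Q 1 ∧ Q 2 :=
  ⟨fun h => ⟨h 0, h 1, h 2⟩, by rintro ⟨q0, q1, q2⟩ a; fin_cases a <;> assumption⟩

lemma fin2_forall (Q : Fin 2 → Prop) : (∀ a, Q a) ↔ Q 0 ∧ Q 1 :=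
  ⟨fun h => ⟨h 0, h 1⟩, by rintro ⟨q0, q1⟩ a; fin_cases a <;> assumption⟩

lemma exOr {α : Type*} (P Q R : α → Prop) :
    (∃ x, P x ∧ (Q x ∨ R x)) ↔ (∃ x, P x ∧ Q x) ∨ (∃ x, P x ∧ R x) :=
  ⟨fun ⟨x, hp, hqr⟩ => hqr.elim (fun h => Or.inl ⟨x, hp, h⟩) (fun h => Or.inr ⟨x, hp, h⟩),
   fun h => h.elim (fun ⟨x, hp, hq⟩ => ⟨x, hp, Or.inl hq⟩)
     (fun ⟨x, hp, hr⟩ => ⟨x, hp, Or.inr hr⟩)⟩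

lemma exEq {α : Type*} (P : α → Prop) (a : α) : (∃ x, P x ∧ x = a) ↔ P a :=
  exists_eq_right

lemma exEqF {α ι : Type*} (P : α → Prop) (f : ι → α) :
    (∃ x, P x ∧ ∃ i, x = f i) ↔ ∃ i, P (f i) := by aesop

lemma pshuf1 {a b c : Prop} : (b ∨ a ∨ c) → (a ∨ b ∨ c) := by tauto
lemma pshuf2 {a x y : Prop} : (x ∨ a ∨ y) → (a ∨ x ∨ y) := by tauto
lemma pshuf3 {b x y : Prop} : (y ∨ b ∨ x) → (b ∨ x ∨ y) := by tauto
lemma pshuf4 {a b c : Prop} : (a ∨ b ∨ c) → (b ∨ a ∨ c) := by tauto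
lemma pshuf5 {a x y : Prop} : (a ∨ x ∨ y) → (x ∨ a ∨ y) := by tauto
lemma pshuf6 {b x y : Prop} : (b ∨ x ∨ y) → (y ∨ b ∨ x) := by tauto

/-- Characterization of domination in terms of the data `(b1, b2, b3, g)`. -/
lemma isDomSet_Et (b1 b2 b3 : Bool) (g : Fin n → Finset (Fin 2)) :
    (genBook5 n).IsDomSet (Et b1 b2 b3 g) ↔
      (b1 = true ∨ b2 = true ∨ b3 = true) ∧
      (b1 = true ∨ b2 = true ∨ ∃ i, (0 : Fin 2) ∈ g i) ∧
      (b3 = true ∨ b2 = true ∨ ∃ i, (1 : Fin 2) ∈ g i) ∧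
      (∀ i, (b1 = true ∨ (0 : Fin 2) ∈ g i ∨ (1 : Fin 2) ∈ g i) ∧
        (b3 = true ∨ (0 : Fin 2) ∈ g i ∨ (1 : Fin 2) ∈ g i)) := by
  unfold SimpleGraph.IsDomSet
  rw [Sum.forall, fin3_forall]
  simp only [Prod.forall]
  simp only [fin2_forall, mem_Et, adj_inl0, adj_inl1, adj_inl2, adj_inr0, adj_inr1]
  simp only [exOr, exEq, exEqF, Pt_inl0, Pt_inl1, Pt_inl2, Pt_inr]
  constructor
  · rintro ⟨⟨c0, c1, c2⟩, hd⟩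
    exact ⟨pshuf1 c1, c0, c2, fun i => ⟨pshuf2 (hd i).1, pshuf3 (hd i).2⟩⟩
  · rintro ⟨r1, r2, r3, hr⟩
    exact ⟨⟨r2, pshuf4 r1, r3⟩, fun i => ⟨pshuf5 (hr i).1, pshuf6 (hr i).2⟩⟩

lemma univ_finset_fin2 : (Finset.univ : Finset (Finset (Fin 2))) = {∅, {0}, {1}, {0, 1}} := by
  decide

lemma s_all : ∑ T : Finset (Fin 2), (X : ℂ[X]) ^ T.card = (X + 1) ^ 2 := by
  rw [univ_finset_fin2]
  rw [show ({∅, {0}, {1}, {0, 1}} : Finset (Finset (Fin 2))) =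
    insert ∅ (insert {0} (insert {1} {({0, 1} : Finset (Fin 2))})) from rfl]
  rw [Finset.sum_insert (by decide), Finset.sum_insert (by decide),
    Finset.sum_insert (by decide), Finset.sum_singleton]
  norm_num
  ring

lemma s_ne : ∑ T : Finset (Fin 2),
    (if (0 : Fin 2) ∈ T ∨ (1 : Fin 2) ∈ T then (X : ℂ[X]) ^ T.card else 0) = X ^ 2 + 2 * X := by
  rw [univ_finset_fin2]
  rw [show ({∅, {0}, {1}, {0, 1}} : Finset (Finset (Fin 2))) =
    insert ∅ (insert {0} (insert {1} {({0, 1} : Finset (Fin 2))})) from rfl]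
  rw [Finset.sum_insert (by decide), Finset.sum_insert (by decide),
    Finset.sum_insert (by decide), Finset.sum_singleton]
  norm_num
  ring

lemma s_only0 : ∑ T : Finset (Fin 2),
    (if ((0 : Fin 2) ∈ T ∨ (1 : Fin 2) ∈ T) ∧ ¬ (1 : Fin 2) ∈ T then (X : ℂ[X]) ^ T.card else 0)
      = X := by
  rw [univ_finset_fin2]
  rw [show ({∅, {0}, {1}, {0, 1}} : Finset (Finset (Fin 2))) =
    insert ∅ (insert {0} (insert {1} {({0, 1} : Finset (Fin 2))})) from rfl]
  rw [Finset.sum_insert (by decide), Finset.sum_insert (by decide),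
    Finset.sum_insert (by decide), Finset.sum_singleton]
  norm_num

lemma s_only1 : ∑ T : Finset (Fin 2),
    (if ((0 : Fin 2) ∈ T ∨ (1 : Fin 2) ∈ T) ∧ ¬ (0 : Fin 2) ∈ T then (X : ℂ[X]) ^ T.card else 0)
      = X := by
  rw [univ_finset_fin2]
  rw [show ({∅, {0}, {1}, {0, 1}} : Finset (Finset (Fin 2))) =
    insert ∅ (insert {0} (insert {1} {({0, 1} : Finset (Fin 2))})) from rfl]
  rw [Finset.sum_insert (by decide), Finset.sum_insert (by decide),
    Finset.sum_insert (by decide), Finset.sum_singleton]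
  norm_num

lemma sum_prod_fn (h : Finset (Fin 2) → ℂ[X]) :
    ∑ g : Fin n → Finset (Fin 2), ∏ i, h (g i) = (∑ T : Finset (Fin 2), h T) ^ n := by
  rw [← Fintype.prod_sum (fun (_ : Fin n) (T : Finset (Fin 2)) => h T)]
  rw [Finset.prod_const, Finset.card_univ, Fintype.card_fin]

lemma sumA : ∑ g : Fin n → Finset (Fin 2), (X : ℂ[X]) ^ (∑ i, (g i).card)
    = ((X + 1) ^ 2) ^ n := by
  rw [← s_all, ← sum_prod_fn]
  exact Finset.sum_congr rfl fun g _ => by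
    rw [Finset.prod_pow_eq_pow_sum]

lemma sumB (p : Finset (Fin 2) → Prop) [DecidablePred p] :
    ∑ g : Fin n → Finset (Fin 2),
        (if ∀ i, p (g i) then (X : ℂ[X]) ^ (∑ i, (g i).card) else 0)
      = (∑ T : Finset (Fin 2), if p T then (X : ℂ[X]) ^ T.card else 0) ^ n := by
  rw [← sum_prod_fn]
  refine Finset.sum_congr rfl fun g _ => ?_
  by_cases h : ∀ i, p (g i)
  · rw [if_pos h, ← Finset.prod_pow_eq_pow_sum]
    exact Finset.prod_congr rfl fun i _ => (if_pos (h i)).symm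
  · rw [if_neg h]
    push_neg at h
    obtain ⟨i, hi⟩ := h
    exact (Finset.prod_eq_zero (Finset.mem_univ i)
      (show (if p (g i) then (X : ℂ[X]) ^ (g i).card else 0) = 0 from if_neg hi)).symm

lemma inner_free (c : ℕ) :
    ∑ x : Fin n → Finset (Fin 2), (X : ℂ[X]) ^ (c + ∑ i, (x i).card)
      = X ^ c * ((X + 1) ^ 2) ^ n := by
  simp only [pow_add]
  rw [← Finset.mul_sum, sumA]

lemma inner_forall (c : ℕ) (p : Finset (Fin 2) → Prop) [DecidablePred p] :
    ∑ x : Fin n → Finset (Fin 2),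
        (if ∀ i, p (x i) then (X : ℂ[X]) ^ (c + ∑ i, (x i).card) else 0)
      = X ^ c * (∑ T : Finset (Fin 2), if p T then (X : ℂ[X]) ^ T.card else 0) ^ n := by
  have h1 : ∀ x : Fin n → Finset (Fin 2),
      (if ∀ i, p (x i) then (X : ℂ[X]) ^ (c + ∑ i, (x i).card) else 0)
        = X ^ c * (if ∀ i, p (x i) then (X : ℂ[X]) ^ (∑ i, (x i).card) else 0) := by
    intro x; split <;> simp [pow_add]
  rw [Finset.sum_congr rfl fun x _ => h1 x, ← Finset.mul_sum, sumB]

lemma ite_and_sub (p q : Prop) [Decidable p] [Decidable q] (x : ℂ[X]) :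
    (if p ∧ q then x else 0) = (if q then x else 0) - (if q ∧ ¬p then x else 0) := by
  by_cases hp : p <;> by_cases hq : q <;> simp [hp, hq]

end DomProofAux

open DomProofAux in
/-- For every `n ≥ 1`,
`D(B_{n,5},x) = x²(x+1)^{2n+1} − 2x^{n+1} + (x²+2x)ⁿ(2x²+3x)`. -/
theorem domPoly_genBook5 (n : ℕ) (hn : 1 ≤ n) :
    domPoly (genBook5 n) =
      X ^ 2 * (X + 1) ^ (2 * n + 1) - 2 * X ^ (n + 1)
        + (X ^ 2 + 2 * X) ^ n * (2 * X ^ 2 + 3 * X) := by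
  classical
  rw [domPoly, Finset.sum_filter]
  rw [← Equiv.sum_comp (E n)
    (fun S => if (genBook5 n).IsDomSet S then (X : ℂ[X]) ^ S.card else 0)]
  simp only [E, Equiv.coe_fn_mk]
  simp only [isDomSet_Et, card_Et]
  simp only [Fintype.sum_prod_type, Fintype.sum_bool]
  simp only [eq_self_iff_true, true_or, true_and, or_true, and_true, if_true, cond_true,
    cond_false, Bool.false_eq_true, false_or, or_false, false_and, and_false, if_false, and_self,
    forall_const, forall_true_iff, Finset.sum_const_zero, add_zero, zero_add]
  have key : ∀ c : ℕ, ∀ j : Fin 2,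
      (∑ T : Finset (Fin 2),
        (if ((0 : Fin 2) ∈ T ∨ (1 : Fin 2) ∈ T) ∧ ¬ j ∈ T then (X : ℂ[X]) ^ T.card else 0) = X) →
      ∑ x : Fin n → Finset (Fin 2),
      (if (∃ i, j ∈ x i) ∧ ∀ i : Fin n, (0 : Fin 2) ∈ x i ∨ (1 : Fin 2) ∈ x i
        then (X : ℂ[X]) ^ (c + ∑ i, (x i).card) else 0)
      = X ^ c * ((X ^ 2 + 2 * X) ^ n - X ^ n) := by
    intro c j hs
    have h1 : ∀ x : Fin n → Finset (Fin 2),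
        (if (∃ i, j ∈ x i) ∧ (∀ i : Fin n, (0 : Fin 2) ∈ x i ∨ (1 : Fin 2) ∈ x i)
            then (X : ℂ[X]) ^ (c + ∑ i, (x i).card) else 0)
          = (if (∀ i : Fin n, (0 : Fin 2) ∈ x i ∨ (1 : Fin 2) ∈ x i)
              then (X : ℂ[X]) ^ (c + ∑ i, (x i).card) else 0)
            - (if (∀ i : Fin n, ((0 : Fin 2) ∈ x i ∨ (1 : Fin 2) ∈ x i) ∧ ¬ j ∈ x i)
              then (X : ℂ[X]) ^ (c + ∑ i, (x i).card) else 0) := by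
      intro x
      rw [ite_and_sub]
      congr 1
      refine if_congr ?_ rfl rfl
      rw [not_exists]
      exact (and_congr_right fun _ => Iff.rfl).trans forall_and.symm
    rw [Finset.sum_congr rfl fun x _ => h1 x, Finset.sum_sub_distrib,
      inner_forall c (fun T => (0 : Fin 2) ∈ T ∨ (1 : Fin 2) ∈ T),
      inner_forall c (fun T => ((0 : Fin 2) ∈ T ∨ (1 : Fin 2) ∈ T) ∧ ¬ j ∈ T), s_ne, hs]
    ring
  rw [inner_free, inner_free,
    inner_forall (1 + 1) (fun T => (0 : Fin 2) ∈ T ∨ (1 : Fin 2) ∈ T),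
    inner_forall 1 (fun T => (0 : Fin 2) ∈ T ∨ (1 : Fin 2) ∈ T),
    key 1 1 s_only0, key 1 0 s_only1, s_ne,
    show (((X + 1) ^ 2 : ℂ[X])) ^ n = (X + 1) ^ (2 * n) from by rw [← pow_mul]]
  ring
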